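/- Let p be an odd prime and s ≥ 3 an integer with (p-1) | (s-1), and suppose that i^{s-1} ≡ 1 (mod p²) for all integers 1 ≤ i ≤ p-1. Then f(p) := ∑_{k=0}^{p-1} (-1)^k · C(p,k) · (p-k)^s ≡ -p (mod p²). -/

import Mathlib

/-! The hypothesis makes `(p - k) ^ s ≡ p - k (mod p²)` for `1 ≤ k ≤ p - 1`, while the `k = 0`
term `p ^ s` vanishes modulo `p²`. What remains is `∑ (-1)^k C(p,k) (p - k)` without its
`k = 0` term `p`; since `C(p,k) (p - k) = p C(p-1,k)`, the full sum is `p` times an alternating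
sum of binomial coefficients, hence `0`, and the truncated one is `-p`. -/

theorem Int.pow_modEq_self_of_pow_pred_modEq_one {a n : ℤ} {s : ℕ} (hs : s ≠ 0)
    (h : a ^ (s - 1) ≡ 1 [ZMOD n]) : a ^ s ≡ a [ZMOD n] := by
  obtain ⟨t, rfl⟩ := Nat.exists_eq_succ_of_ne_zero hs
  simpa [pow_succ] using h.mul_right a

theorem Int.alternating_sum_range_choose_mul_sub {n : ℕ} (hn : n ≠ 1) :
    ∑ k ∈ Finset.range n, (-1 : ℤ) ^ k * n.choose k * ((n : ℤ) - k) = 0 := by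
  rcases n with _ | m
  · simp
  have hm : m ≠ 0 := by omega
  have hterm : ∀ k ∈ Finset.range (m + 1),
      (-1 : ℤ) ^ k * (m + 1).choose k * (((m + 1 : ℕ) : ℤ) - k) =
        (m + 1) * ((-1) ^ k * m.choose k) := by
    intro k hk
    have hkm : k ≤ m + 1 := (Finset.mem_range.mp hk).le
    have := congrArg (Nat.cast : ℕ → ℤ) (Nat.choose_mul_succ_eq m k)
    push_cast [Nat.cast_sub hkm] at this ⊢
    linear_combination (-1 : ℤ) ^ k * this.symm
  rw [Finset.sum_congr rfl hterm, ← Finset.mul_sum, Int.alternating_sum_range_choose_of_ne hm,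
    mul_zero]

theorem fp_congr_neg_p_mod_p_sq_general (p : ℕ)
    (s : ℕ) (hs : 3 ≤ s)
    (h : ∀ i : ℕ, 1 ≤ i → i ≤ p - 1 → (i : ℤ) ^ (s - 1) ≡ 1 [ZMOD (p ^ 2)]) :
    (∑ k ∈ Finset.range p, (-1 : ℤ) ^ k * (p.choose k) * ((p : ℤ) - k) ^ s)
      ≡ -(p : ℤ) [ZMOD (p ^ 2)] := by
  rcases Nat.lt_or_ge p 2 with hp | hp
  · interval_cases p <;> simp [Int.ModEq]
  have hp0 : 0 < p := by omega
  have hzero : (p : ℤ) ^ s ≡ 0 [ZMOD (p ^ 2)] :=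
    Int.modEq_zero_iff_dvd.mpr (pow_dvd_pow _ (by omega))
  have hfixed : ∀ k ∈ Finset.Ico 1 p, ((p : ℤ) - k) ^ s ≡ (p : ℤ) - k [ZMOD (p ^ 2)] := by
    intro k hk
    obtain ⟨hk1, hkp⟩ := Finset.mem_Ico.mp hk
    have := h (p - k) (by omega) (by omega)
    rw [Nat.cast_sub hkp.le] at this
    exact Int.pow_modEq_self_of_pow_pred_modEq_one (by omega) this
  calc (∑ k ∈ Finset.range p, (-1 : ℤ) ^ k * (p.choose k) * ((p : ℤ) - k) ^ s)
      = (p : ℤ) ^ s + ∑ k ∈ Finset.Ico 1 p, (-1 : ℤ) ^ k * (p.choose k) * ((p : ℤ) - k) ^ s := by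
        simp [Finset.sum_range_eq_add_Ico _ hp0]
    _ ≡ 0 + ∑ k ∈ Finset.Ico 1 p, (-1 : ℤ) ^ k * (p.choose k) * ((p : ℤ) - k) [ZMOD (p ^ 2)] :=
        hzero.add (Int.ModEq.sum fun k hk => (hfixed k hk).mul_left _)
    _ = ∑ k ∈ Finset.range p, (-1 : ℤ) ^ k * (p.choose k) * ((p : ℤ) - k) - p := by
        simp [Finset.sum_range_eq_add_Ico _ hp0]
    _ = -(p : ℤ) := by rw [Int.alternating_sum_range_choose_mul_sub (by omega), zero_sub]

theorem fp_congr_neg_p_mod_p_sq (p : ℕ) (hp : p.Prime) (hpodd : Odd p)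
    (s : ℕ) (hs : 3 ≤ s) (hdvd : (p - 1) ∣ (s - 1))
    (h : ∀ i : ℕ, 1 ≤ i → i ≤ p - 1 → (i : ℤ) ^ (s - 1) ≡ 1 [ZMOD (p ^ 2)]) :
    (∑ k ∈ Finset.range p, (-1 : ℤ) ^ k * (p.choose k) * ((p : ℤ) - k) ^ s)
      ≡ -(p : ℤ) [ZMOD (p ^ 2)] :=
  fp_congr_neg_p_mod_p_sq_general p s hs h
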